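/- Let g be a finite abstract strategic game where each agent's preference relation ≺_a over outcomes is a strict partial order. Define BR_a(γ) for γ ∈ Σ_{-a} as the set of strategies s ∈ S_a such that: (1) s is maximal with respect to ≺_a extended over all S_{-a}; (2) s is maximal with respect to ≺_a extended over γ; and (3) there exists c ∈ γ such that s is maximal with respect to ≺_a extended over {c}. Then BR_a(γ) is nonempty for all γ, and the resulting ndbr multi strategic game has an ndbr equilibrium. -/
import Mathlib


/-- The profile `(c ; s)` where the opponents of `a` play `c` and `a` plays `s`. -/
def combine {A : Type*} [DecidableEq A] {S : A → Type*} (a : A) (s : S a)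
    (c : ∀ b : {x : A // x ≠ a}, S b.1) : ∀ b, S b :=
  fun b => if h : b = a then cast (congrArg S h).symm s else c ⟨b, h⟩

/-- The extension `≺^{A'}_a` of agent `a`'s preference to its strategies,
relative to a set `A'` of opponents' partial profiles. -/
def precOn {A Oc : Type*} [DecidableEq A] {S : A → Type*} (P : (∀ b, S b) → Oc)
    (prec : Oc → Oc → Prop) (a : A) (A' : Set (∀ b : {x : A // x ≠ a}, S b.1))
    (s s' : S a) : Prop :=
  (∀ c ∈ A', prec (P (combine a s c)) (P (combine a s' c)) ∨
      P (combine a s c) = P (combine a s' c)) ∧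
  ∃ c ∈ A', prec (P (combine a s c)) (P (combine a s' c))

/-- The set of opponents' partial profiles compatible with `γ ∈ Σ_{-a}`. -/
def gammaSet {A : Type*} {S : A → Type*} (a : A)
    (γ : ∀ b : {x : A // x ≠ a}, Set (S b.1)) : Set (∀ b : {x : A // x ≠ a}, S b.1) :=
  {c | ∀ b, c b ∈ γ b}

/-- `BR_a(γ)`: strategies maximal w.r.t. `≺^{S_{-a}}_a`, maximal w.r.t. `≺^{γ}_a`, and
maximal w.r.t. `≺^{{c}}_a` for some `c ∈ γ`. -/
def BR {A Oc : Type*} [DecidableEq A] {S : A → Type*} (P : (∀ b, S b) → Oc)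
    (prec : A → Oc → Oc → Prop) (a : A)
    (γ : ∀ b : {x : A // x ≠ a}, Set (S b.1)) : Set (S a) :=
  {s | (∀ s', ¬ precOn P (prec a) a Set.univ s s') ∧
    (∀ s', ¬ precOn P (prec a) a (gammaSet a γ) s s') ∧
    ∃ c ∈ gammaSet a γ, ∀ s', ¬ precOn P (prec a) a {c} s s'}

section Aux

variable {A Oc : Type*} [DecidableEq A] {S : A → Type*}
  {P : (∀ b, S b) → Oc} {prec : Oc → Oc → Prop} {a : A}

lemma precOn_trans_left (htr : Transitive prec)
    {R Q : Set (∀ b : {x : A // x ≠ a}, S b.1)} (hRQ : R ⊆ Q) {s s' s'' : S a}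
    (h1 : precOn P prec a Q s s') (h2 : precOn P prec a R s' s'') :
    precOn P prec a R s s'' := by
  constructor
  · intro c hc
    rcases h1.1 c (hRQ hc) with h | h <;> rcases h2.1 c hc with h' | h'
    · exact Or.inl (htr h h')
    · exact Or.inl (h' ▸ h)
    · rw [h]; exact Or.inl h'
    · rw [h, h']; exact Or.inr rfl
  · obtain ⟨c, hc, hstrict⟩ := h2.2
    rcases h1.1 c (hRQ hc) with h | h
    · exact ⟨c, hc, htr h hstrict⟩
    · exact ⟨c, hc, by rw [h]; exact hstrict⟩

lemma precOn_trans_right (htr : Transitive prec)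
    {R Q : Set (∀ b : {x : A // x ≠ a}, S b.1)} (hRQ : R ⊆ Q) {s s' s'' : S a}
    (h1 : precOn P prec a R s s') (h2 : precOn P prec a Q s' s'') :
    precOn P prec a R s s'' := by
  constructor
  · intro c hc
    rcases h1.1 c hc with h | h <;> rcases h2.1 c (hRQ hc) with h' | h'
    · exact Or.inl (htr h h')
    · exact Or.inl (h' ▸ h)
    · rw [h]; exact Or.inl h'
    · rw [h, h']; exact Or.inr rfl
  · obtain ⟨c, hc, hstrict⟩ := h1.2
    rcases h2.1 c (hRQ hc) with h | h
    · exact ⟨c, hc, htr hstrict h⟩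
    · exact ⟨c, hc, by rw [← h]; exact hstrict⟩

lemma exists_max_above {α : Type*} [Finite α] {r : α → α → Prop}
    (htrans : Transitive r) (hirr : ∀ x, ¬ r x x) {X : Set α} {s : α} (hs : s ∈ X) :
    ∃ m ∈ X, (m = s ∨ r s m) ∧ ∀ t ∈ X, ¬ r m t := by
  haveI : IsTrans α (flip r) := ⟨fun x y z h h' => htrans h' h⟩
  haveI : IsIrrefl α (flip r) := ⟨hirr⟩
  obtain ⟨m, hmY, hmin⟩ := (Finite.wellFounded_of_trans_of_irrefl (flip r)).has_min
      {t | t ∈ X ∧ (t = s ∨ r s t)} ⟨s, hs, Or.inl rfl⟩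
  refine ⟨m, hmY.1, hmY.2, fun t ht hrt => ?_⟩
  have hst : t = s ∨ r s t := by
    rcases hmY.2 with h | h
    · exact Or.inr (h ▸ hrt)
    · exact Or.inr (htrans h hrt)
  exact hmin t ⟨ht, hst⟩ hrt

lemma exists_BR_core (hirr : ∀ oc, ¬ prec oc oc) (htr : Transitive prec) [Finite (S a)]
    {G gam : Set (∀ b : {x : A // x ≠ a}, S b.1)} (hGg : gam ⊆ G)
    {c₁ : ∀ b : {x : A // x ≠ a}, S b.1} (hc₁ : c₁ ∈ gam)
    {X : Set (S a)} {s : S a} (hs : s ∈ X) :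
    ∃ m ∈ X,
      (m = s ∨ precOn P prec a G s m ∨ precOn P prec a gam s m ∨
        precOn P prec a {c₁} s m) ∧
      (∀ t ∈ X, ¬ precOn P prec a G m t) ∧ (∀ t ∈ X, ¬ precOn P prec a gam m t) ∧
      (∀ t ∈ X, ¬ precOn P prec a {c₁} m t) := by
  have hsub1 : ({c₁} : Set _) ⊆ gam := by simpa using hc₁
  have hsub2 : ({c₁} : Set _) ⊆ G := hsub1.trans hGg
  set T : S a → S a → Prop := fun x y => precOn P prec a G x y ∨ precOn P prec a gam x y ∨
    precOn P prec a {c₁} x y with hT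
  have htrans : Transitive T := by
    rintro x y z (h1 | h1 | h1) (h2 | h2 | h2)
    · exact Or.inl (precOn_trans_left htr (subset_refl G) h1 h2)
    · exact Or.inr (Or.inl (precOn_trans_left htr hGg h1 h2))
    · exact Or.inr (Or.inr (precOn_trans_left htr hsub2 h1 h2))
    · exact Or.inr (Or.inl (precOn_trans_right htr hGg h1 h2))
    · exact Or.inr (Or.inl (precOn_trans_left htr (subset_refl gam) h1 h2))
    · exact Or.inr (Or.inr (precOn_trans_left htr hsub1 h1 h2))
    · exact Or.inr (Or.inr (precOn_trans_right htr hsub2 h1 h2))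
    · exact Or.inr (Or.inr (precOn_trans_right htr hsub1 h1 h2))
    · exact Or.inr (Or.inr (precOn_trans_left htr (subset_refl _) h1 h2))
  have hirr' : ∀ x, ¬ T x x := by
    rintro x (h | h | h) <;> obtain ⟨c, -, hcc⟩ := h.2 <;> exact hirr _ hcc
  obtain ⟨m, hmX, hms, hmax⟩ := exists_max_above htrans hirr' hs
  exact ⟨m, hmX, hms,
    fun t ht h => hmax t ht (Or.inl h),
    fun t ht h => hmax t ht (Or.inr (Or.inl h)),
    fun t ht h => hmax t ht (Or.inr (Or.inr h))⟩

lemma gammaSet_mono {γ δ : ∀ b : {x : A // x ≠ a}, Set (S b.1)} (h : ∀ b, γ b ⊆ δ b) :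
    gammaSet a γ ⊆ gammaSet a δ := fun c hc b => h b (hc b)

lemma gammaSet_univ :
    gammaSet a (fun b : {x : A // x ≠ a} => (Set.univ : Set (S b.1))) = Set.univ :=
  Set.eq_univ_of_forall fun _ b => Set.mem_univ _

end Aux

noncomputable section Main

variable {A Oc : Type*} [DecidableEq A] {S : A → Type*}

/-- measure of a family of strategy sets -/
def famSize (X : ∀ a, Set (S a)) : ℕ := Set.ncard {p : (a : A) × S a | p.2 ∈ X p.1}

lemma famSize_lt [Finite A] [∀ a, Finite (S a)] {N X : ∀ a, Set (S a)}
    (hsub : ∀ a, N a ⊆ X a) (hne : ¬ ∀ a, N a = X a) : famSize N < famSize X := by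
  apply Set.ncard_lt_ncard
  · refine ⟨fun p hp => hsub p.1 hp, fun h => hne fun a => ?_⟩
    ext x
    exact ⟨fun hx => hsub a hx, fun hx => h (show ((⟨a, x⟩ : (a : A) × S a)).2 ∈ X _ from hx)⟩
  · exact Set.toFinite _

lemma main_ind [Finite A] [∀ a, Finite (S a)]
    {P : (∀ b, S b) → Oc} {prec : A → Oc → Oc → Prop}
    (hirr : ∀ a oc, ¬ prec a oc oc) (htr : ∀ a, Transitive (prec a)) :
    ∀ (n : ℕ) (X : ∀ a, Set (S a)), famSize X < n → (∀ a, (X a).Nonempty) →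
    ∃ σ : ∀ a, Set (S a), (∀ a, (σ a).Nonempty) ∧ (∀ a, σ a ⊆ X a) ∧
      ∀ a, ∀ s ∈ σ a,
        (∀ t ∈ X a, ¬ precOn P (prec a) a (gammaSet a fun b => X b.1) s t) ∧
        (∀ t ∈ X a, ¬ precOn P (prec a) a (gammaSet a fun b => σ b.1) s t) ∧
        ∃ c ∈ gammaSet a fun b => σ b.1, ∀ t ∈ X a, ¬ precOn P (prec a) a {c} s t := by
  intro n
  induction n with
  | zero => exact fun X h _ => absurd h (Nat.not_lt_zero _)
  | succ n ih =>
    intro X hsize hX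
    -- the relative best responses to the full family X
    set N : ∀ a, Set (S a) := fun a =>
      {s | s ∈ X a ∧
        (∀ t ∈ X a, ¬ precOn P (prec a) a (gammaSet a fun b => X b.1) s t) ∧
        ∃ c ∈ gammaSet a fun b => X b.1, ∀ t ∈ X a, ¬ precOn P (prec a) a {c} s t} with hN
    have hNX : ∀ a, N a ⊆ X a := fun a s hs => hs.1
    have hNne : ∀ a, (N a).Nonempty := by
      intro a
      have hc₁ : (fun b : {x : A // x ≠ a} => (hX b.1).some) ∈
          gammaSet a (fun b => X b.1) := fun b => (hX b.1).some_mem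
      obtain ⟨m, hmX, -, hG, -, hc⟩ := exists_BR_core (hirr a) (htr a)
        (subset_refl (gammaSet a fun b : {x : A // x ≠ a} => X b.1)) hc₁ (hX a).some_mem
      exact ⟨m, hmX, hG, _, hc₁, hc⟩
    by_cases hall : ∀ a, N a = X a
    · refine ⟨X, hX, fun a => subset_refl _, fun a s hs => ?_⟩
      have hsN : s ∈ N a := (hall a).symm ▸ hs
      exact ⟨hsN.2.1, hsN.2.1, hsN.2.2⟩
    · obtain ⟨σ, hσne, hσN, heq⟩ := ih N (lt_of_lt_of_le (famSize_lt hNX hall)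
        (Nat.lt_succ_iff.mp hsize)) hNne
      have hσX : ∀ a, σ a ⊆ X a := fun a => (hσN a).trans (hNX a)
      refine ⟨σ, hσne, hσX, fun a s hs => ?_⟩
      have hsN : s ∈ N a := hσN a hs
      obtain ⟨-, k2, c₁, hc₁, k3⟩ := heq a s hs
      have hGσX : gammaSet a (fun b : {x : A // x ≠ a} => σ b.1) ⊆
          gammaSet a (fun b => X b.1) := gammaSet_mono fun b => hσX b.1
      have hc₁s : ({c₁} : Set _) ⊆ gammaSet a (fun b : {x : A // x ≠ a} => σ b.1) := by
        simpa using hc₁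
      refine ⟨hsN.2.1, ?_, c₁, hc₁, ?_⟩
      · -- maximal w.r.t. γ = σ against all of X a
        intro t ht hpre
        obtain ⟨m, hmX, hms, hG, hg, hc⟩ :=
          exists_BR_core (P := P) (hirr a) (htr a) hGσX hc₁ ht
        have hmN : m ∈ N a := ⟨hmX, hG, c₁, hGσX hc₁, hc⟩
        have : precOn P (prec a) a (gammaSet a fun b : {x : A // x ≠ a} => σ b.1) s m ∨
            precOn P (prec a) a {c₁} s m := by
          rcases hms with rfl | h | h | h
          · exact Or.inl hpre
          · exact Or.inl (precOn_trans_right (htr a) hGσX hpre h)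
          · exact Or.inl (precOn_trans_right (htr a) (subset_refl _) hpre h)
          · exact Or.inr (precOn_trans_left (htr a) hc₁s hpre h)
        rcases this with h | h
        · exact k2 m hmN h
        · exact k3 m hmN h
      · -- maximal w.r.t. {c₁} against all of X a
        intro t ht hpre
        obtain ⟨m, hmX, hms, hG, hg, hc⟩ :=
          exists_BR_core (P := P) (hirr a) (htr a) hGσX hc₁ ht
        have hmN : m ∈ N a := ⟨hmX, hG, c₁, hGσX hc₁, hc⟩
        have : precOn P (prec a) a {c₁} s m := by
          rcases hms with rfl | h | h | h
          · exact hpre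
          · exact precOn_trans_right (htr a) (hc₁s.trans hGσX) hpre h
          · exact precOn_trans_right (htr a) hc₁s hpre h
          · exact precOn_trans_left (htr a) (subset_refl _) hpre h
        exact k3 m hmN this

end Main

theorem stmt7 {A Oc : Type*} [DecidableEq A] [Nonempty A] [Finite A]
    {S : A → Type*} [∀ a, Nonempty (S a)] [∀ a, Finite (S a)]
    (P : (∀ b, S b) → Oc) (prec : A → Oc → Oc → Prop)
    (hirr : ∀ a oc, ¬ prec a oc oc)
    (htr : ∀ a, Transitive (prec a)) :
    (∀ (a : A) (γ : ∀ b : {x : A // x ≠ a}, Set (S b.1)),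
      (∀ b, (γ b).Nonempty) → (BR P prec a γ).Nonempty) ∧
    ∃ σ : ∀ a, Set (S a), (∀ a, (σ a).Nonempty) ∧
      ∀ a, σ a ⊆ BR P prec a (fun b => σ b.1) := by
  constructor
  · intro a γ hγ
    have hc₁ : (fun b : {x : A // x ≠ a} => (hγ b).some) ∈ gammaSet a γ :=
      fun b => (hγ b).some_mem
    obtain ⟨m, -, -, hG, hg, hc⟩ := exists_BR_core (P := P) (hirr a) (htr a)
      (Set.subset_univ (gammaSet a γ)) hc₁
      (Set.mem_univ (Classical.arbitrary (S a)))
    exact ⟨m, fun s' => hG s' (Set.mem_univ s'), fun s' => hg s' (Set.mem_univ s'),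
      _, hc₁, fun s' => hc s' (Set.mem_univ s')⟩
  · obtain ⟨σ, hσne, -, heq⟩ := main_ind (P := P) hirr htr
      (famSize (fun a : A => (Set.univ : Set (S a))) + 1)
      (fun _ => Set.univ) (Nat.lt_succ_self _) (fun a => Set.univ_nonempty)
    refine ⟨σ, hσne, fun a s hs => ?_⟩
    obtain ⟨g1, g2, c, hc, g3⟩ := heq a s hs
    refine ⟨fun s' => ?_, fun s' => g2 s' (Set.mem_univ s'), c, hc,
      fun s' => g3 s' (Set.mem_univ s')⟩
    have := g1 s' (Set.mem_univ s')
    rwa [gammaSet_univ] at this
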